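/- Heavy-tailed asymptotics of the running infimum of the future drawup (Theorem 4.1, second assertion). Assume E[X_1] ∈ (−∞, 0), so that M = sup_{s≥0} X_s is finite almost surely, and let α > 0. Suppose the tail function r(x) = P(M > x) satisfies r(x) > 0 for all x ≥ 0 and lim_{x→∞} r(x − y)/r(x) = e^{α y} for every y ∈ ℝ (i.e. the law of M belongs to the class L^{(α)}). Then for every t > 0, lim_{x→∞} P(\underline U^*_t > x) / r(x) = E[e^{−α D_t}] = E[e^{α \underline X_t}], a constant in (0, 1]. -/

import Mathlib

/-!
For `x ≥ 0` the infimum over `u ≤ t` of `sup_{v ≥ u} (X_v - X_u)` exceeds `x` exactly when the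
post-`t` supremum `sup_{v ≥ t} (X_v - X_t)` exceeds `x + D_t`: the infimum is approached at the
times `u` where `X` nearly attains its running maximum. By the Markov property at `t`, the post-`t`
supremum is independent of `D_t` and distributed as `M`, so
`P(\underline U^*_t > x) = E[r(x + D_t)]`. As `r` is antitone, `r(x + D_t)/r(x) ≤ 1`, and it tends
to `e^{-α D_t}`; dominated convergence gives the limit.

The identity `E[e^{-α D_t}] = E[e^{α \underline X_t}]` is duality. On the dyadic grid of level `N`
the increments of `X` are i.i.d., so reversing their order preserves their law; reversal turns
`max_k S_k - S_n` into `max_k (-S_k)` for the partial sums `S`. Right-continuity of the paths lets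
`N → ∞`.
-/

open MeasureTheory ProbabilityTheory Filter Set

noncomputable section

variable {Ω : Type*} [MeasurableSpace Ω]

/-- Running supremum of the process on `[0, t]`. -/
def ovX (X : ℝ → Ω → ℝ) (t : ℝ) (ω : Ω) : ℝ := sSup ((fun s => X s ω) '' Icc 0 t)

/-- Running infimum of the process on `[0, t]`. -/
def unX (X : ℝ → Ω → ℝ) (t : ℝ) (ω : Ω) : ℝ := sInf ((fun s => X s ω) '' Icc 0 t)

/-- Drawup `U_t = X_t - inf_{0≤s≤t} X_s`. -/
def drawup (X : ℝ → Ω → ℝ) (t : ℝ) (ω : Ω) : ℝ := X t ω - unX X t ω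

/-- Drawdown `D_t = sup_{0≤s≤t} X_s - X_t`. -/
def drawdown (X : ℝ → Ω → ℝ) (t : ℝ) (ω : Ω) : ℝ := ovX X t ω - X t ω

/-- Running supremum of the drawup. -/
def ovU (X : ℝ → Ω → ℝ) (t : ℝ) (ω : Ω) : ℝ := sSup ((fun u => drawup X u ω) '' Icc 0 t)

/-- Running supremum of the drawdown. -/
def ovD (X : ℝ → Ω → ℝ) (t : ℝ) (ω : Ω) : ℝ := sSup ((fun u => drawdown X u ω) '' Icc 0 t)

/-- Future drawup `U^*_{t,s} = sup_{t ≤ u < t+s} (X_u - X_t)`. -/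
def futDrawup (X : ℝ → Ω → ℝ) (t s : ℝ) (ω : Ω) : ℝ :=
  sSup ((fun u => X u ω - X t ω) '' Ico t (t + s))

/-- Future drawdown `D^*_{t,s} = inf_{t ≤ u < t+s} (X_u - X_t)`. -/
def futDrawdown (X : ℝ → Ω → ℝ) (t s : ℝ) (ω : Ω) : ℝ :=
  sInf ((fun u => X u ω - X t ω) '' Ico t (t + s))

/-- `\overline U^*_{t,s} = sup_{0≤u≤t} U^*_{u,s}`. -/
def ovUStar (X : ℝ → Ω → ℝ) (t s : ℝ) (ω : Ω) : ℝ :=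
  sSup ((fun u => futDrawup X u s ω) '' Icc 0 t)

/-- `\underline D^*_{t,s} = inf_{0≤u≤t} D^*_{u,s}`. -/
def unDStar (X : ℝ → Ω → ℝ) (t s : ℝ) (ω : Ω) : ℝ :=
  sInf ((fun u => futDrawdown X u s ω) '' Icc 0 t)

/-- `sup_{v ≥ u} (X_v - X_u)` as an extended real number. -/
def futSupE (X : ℝ → Ω → ℝ) (u : ℝ) (ω : Ω) : EReal :=
  ⨆ v : {v : ℝ // u ≤ v}, ((X v ω - X u ω : ℝ) : EReal)

/-- `inf_{v ≥ u} (X_v - X_u)` as an extended real number. -/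
def futInfE (X : ℝ → Ω → ℝ) (u : ℝ) (ω : Ω) : EReal :=
  ⨅ v : {v : ℝ // u ≤ v}, ((X v ω - X u ω : ℝ) : EReal)

/-- Infinite-horizon `\overline U^*_t = sup_{0≤u≤t} sup_{v≥u}(X_v - X_u)`. -/
def ovUStarInf (X : ℝ → Ω → ℝ) (t : ℝ) (ω : Ω) : EReal :=
  ⨆ u : Icc (0:ℝ) t, futSupE X u ω

/-- Infinite-horizon `\underline U^*_t = inf_{0≤u≤t} sup_{v≥u}(X_v - X_u)`. -/
def unUStarInf (X : ℝ → Ω → ℝ) (t : ℝ) (ω : Ω) : EReal :=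
  ⨅ u : Icc (0:ℝ) t, futSupE X u ω

/-- Infinite-horizon `\overline D^*_t = sup_{0≤u≤t} inf_{v≥u}(X_v - X_u)`. -/
def ovDStarInf (X : ℝ → Ω → ℝ) (t : ℝ) (ω : Ω) : EReal :=
  ⨆ u : Icc (0:ℝ) t, futInfE X u ω

/-- Infinite-horizon `\underline D^*_t = inf_{0≤u≤t} inf_{v≥u}(X_v - X_u)`. -/
def unDStarInf (X : ℝ → Ω → ℝ) (t : ℝ) (ω : Ω) : EReal :=
  ⨅ u : Icc (0:ℝ) t, futInfE X u ω

/-- All-time supremum `M = sup_{s ≥ 0} X_s` as an extended real number. -/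
def MSup (X : ℝ → Ω → ℝ) (ω : Ω) : EReal := ⨆ s : {s : ℝ // 0 ≤ s}, ((X s ω : ℝ) : EReal)

/-- All-time infimum `I = inf_{s ≥ 0} X_s` as an extended real number. -/
def IInf (X : ℝ → Ω → ℝ) (ω : Ω) : EReal := ⨅ s : {s : ℝ // 0 ≤ s}, ((X s ω : ℝ) : EReal)

/-- A (real-valued) Lévy process: càdlàg paths started at `0`, with stationary
increments that are independent of the past. -/
structure IsLevyProcess (P : Measure Ω) (X : ℝ → Ω → ℝ) : Prop where
  measurable : ∀ t : ℝ, Measurable (X t)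
  init : ∀ ω, X 0 ω = 0
  right_cont : ∀ ω, ∀ t : ℝ, 0 ≤ t → ContinuousWithinAt (fun u => X u ω) (Ici t) t
  left_lim : ∀ ω, ∀ t : ℝ, 0 < t → ∃ l : ℝ, Tendsto (fun u => X u ω) (nhdsWithin t (Iio t)) (nhds l)
  indep_incr : ∀ t : ℝ, 0 ≤ t →
    IndepFun (fun ω => (fun s : ℝ => X (t + max s 0) ω - X t ω))
      (fun ω => (fun u : Icc (0:ℝ) t => X u ω)) P
  stat_incr : ∀ t : ℝ, 0 ≤ t →
    Measure.map (fun ω => (fun s : ℝ => X (t + max s 0) ω - X t ω)) P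
      = Measure.map (fun ω => (fun s : ℝ => X (max s 0) ω)) P

/-- An exponential random variable of rate `q`, independent of the whole path of `X`. -/
structure IsExpIndep (P : Measure Ω) (X : ℝ → Ω → ℝ) (q : ℝ) (e : Ω → ℝ) : Prop where
  meas : Measurable e
  nonneg : ∀ ω, 0 ≤ e ω
  law : ∀ x : ℝ, 0 ≤ x → P {ω | x < e ω} = ENNReal.ofReal (Real.exp (-q * x))
  indep : IndepFun e (fun ω => (fun s : {s : ℝ // 0 ≤ s} => X s ω)) P

/-- Cramér's condition with exponent `γ`. -/
structure CramerCond (P : Measure Ω) (X : ℝ → Ω → ℝ) (γ : ℝ) : Prop where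
  gamma_pos : 0 < γ
  int_exp : Integrable (fun ω => Real.exp (γ * X 1 ω)) P
  exp_eq_one : ∫ ω, Real.exp (γ * X 1 ω) ∂P = 1
  int_X1 : Integrable (X 1) P
  mean_neg : ∫ ω, X 1 ω ∂P < 0
  int_exp_abs : Integrable (fun ω => Real.exp (γ * X 1 ω) * |X 1 ω|) P

open scoped Topology

theorem isBounded_image_Icc_of_cadlag {E : Type*} [PseudoMetricSpace E] {f : ℝ → E} (t : ℝ)
    (hrc : ∀ s, 0 ≤ s → ContinuousWithinAt f (Ici s) s)
    (hll : ∀ s, 0 < s → ∃ l, Tendsto f (𝓝[<] s) (𝓝 l)) :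
    Bornology.IsBounded (f '' Icc 0 t) := by
  refine isCompact_Icc.induction_on (p := fun U => Bornology.IsBounded (f '' U))
    (by simp) (fun U V hUV hV => hV.subset (image_mono hUV))
    (fun U V hU hV => by simpa only [image_union] using hU.union hV) fun s hs => ?_
  suffices ∃ B : Set E, Bornology.IsBounded B ∧ ∀ᶠ u in 𝓝[Icc 0 t] s, f u ∈ B by
    obtain ⟨B, hB, hev⟩ := this
    exact ⟨_, hev, hB.subset (image_subset_iff.mpr fun _ hu => hu)⟩
  have hright : ∀ᶠ u in 𝓝[≥] s, f u ∈ Metric.ball (f s) 1 :=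
    (hrc s hs.1).eventually (Metric.ball_mem_nhds _ one_pos)
  rcases hs.1.eq_or_lt with rfl | hs0
  · exact ⟨_, Metric.isBounded_ball, nhdsWithin_mono _ Icc_subset_Ici_self hright⟩
  · obtain ⟨l, hl⟩ := hll s hs0
    have hleft : ∀ᶠ u in 𝓝[<] s, f u ∈ Metric.ball l 1 :=
      hl.eventually (Metric.ball_mem_nhds _ one_pos)
    refine ⟨Metric.ball (f s) 1 ∪ Metric.ball l 1,
      Metric.isBounded_ball.union Metric.isBounded_ball, nhdsWithin_le_nhds ?_⟩
    rw [← nhdsLT_sup_nhdsGE]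
    exact eventually_sup.mpr ⟨hleft.mono fun _ h => Or.inr h, hright.mono fun _ h => Or.inl h⟩

def dyadic (t : ℝ) (N : ℕ) (k : Fin (2 ^ N + 1)) : ℝ := t * k / 2 ^ N

theorem dyadic_mem_Icc {t : ℝ} (ht : 0 ≤ t) (N : ℕ) (k : Fin (2 ^ N + 1)) :
    dyadic t N k ∈ Icc 0 t := by
  have hk : (k : ℝ) ≤ 2 ^ N := by exact_mod_cast Nat.lt_succ_iff.mp k.isLt
  refine ⟨by unfold dyadic; positivity, ?_⟩
  rw [dyadic, div_le_iff₀ (by positivity)]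
  exact mul_le_mul_of_nonneg_left hk ht

@[simp] theorem dyadic_zero (t : ℝ) (N : ℕ) : dyadic t N 0 = 0 := by simp [dyadic]

@[simp] theorem dyadic_last (t : ℝ) (N : ℕ) : dyadic t N (Fin.last _) = t := by
  simp [dyadic]

theorem dyadic_eq_dyadic_succ (t : ℝ) (N : ℕ) (k : Fin (2 ^ N + 1)) :
    dyadic t N k = dyadic t (N + 1) ⟨2 * k, by omega⟩ := by
  simp only [dyadic]
  push_cast
  ring

theorem dyadic_succ_sub_castSucc (t : ℝ) (N : ℕ) (i : Fin (2 ^ N)) :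
    dyadic t N i.succ - dyadic t N i.castSucc = t / 2 ^ N := by
  simp only [dyadic, Fin.val_succ, Fin.val_castSucc]
  push_cast
  ring

theorem monotone_dyadic {t : ℝ} (ht : 0 ≤ t) (N : ℕ) : Monotone (dyadic t N) := fun k k' h => by
  unfold dyadic
  gcongr
  exact_mod_cast h

theorem exists_dyadic_mem_Ico {t s δ : ℝ} (hs : s ∈ Icc 0 t) (hδ : 0 < δ) :
    ∃ N k, dyadic t N k ∈ Ico s (s + δ) := by
  rcases hs.2.eq_or_lt with rfl | hst
  · exact ⟨0, Fin.last _, by rw [dyadic_last]; exact ⟨le_rfl, by linarith⟩⟩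
  have ht : 0 < t := hs.1.trans_lt hst
  obtain ⟨N, hN⟩ := pow_unbounded_of_one_lt (t / δ) one_lt_two
  have h2N : (0 : ℝ) < 2 ^ N := by positivity
  have hmesh : t / 2 ^ N < δ := by
    rw [div_lt_iff₀ h2N, mul_comm]; rwa [div_lt_iff₀ hδ] at hN
  set a := s * 2 ^ N / t
  have hk : ⌈a⌉₊ < 2 ^ N + 1 := by
    refine Nat.lt_succ_of_le (Nat.ceil_le.mpr ?_)
    rw [div_le_iff₀ ht]; push_cast; nlinarith [hs.2]
  refine ⟨N, ⟨⌈a⌉₊, hk⟩, ?_, ?_⟩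
  · have := Nat.le_ceil a
    rw [div_le_iff₀ ht] at this
    rw [dyadic, le_div_iff₀ h2N]; linarith
  · have := Nat.ceil_lt_add_one (show 0 ≤ a from div_nonneg (mul_nonneg hs.1 h2N.le) ht.le)
    have ha : t * a = s * 2 ^ N := by simp only [a]; field_simp
    calc dyadic t N ⟨⌈a⌉₊, hk⟩ = t * ⌈a⌉₊ / 2 ^ N := rfl
      _ < t * (a + 1) / 2 ^ N := by gcongr
      _ = s + t / 2 ^ N := by rw [mul_add, ha]; field_simp
      _ < s + δ := by linarith

def dyadicMax (f : ℝ → ℝ) (t : ℝ) (N : ℕ) : ℝ := ⨆ k, f (dyadic t N k)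

theorem le_dyadicMax (f : ℝ → ℝ) (t : ℝ) (N : ℕ) (k : Fin (2 ^ N + 1)) :
    f (dyadic t N k) ≤ dyadicMax f t N :=
  le_ciSup (f := fun k => f (dyadic t N k)) (Finite.bddAbove_range _) k

theorem dyadicMax_le_sSup {f : ℝ → ℝ} {t : ℝ} (ht : 0 ≤ t) (hb : BddAbove (f '' Icc 0 t))
    (N : ℕ) : dyadicMax f t N ≤ sSup (f '' Icc 0 t) :=
  ciSup_le fun k => le_csSup hb (mem_image_of_mem f (dyadic_mem_Icc ht N k))

theorem monotone_dyadicMax (f : ℝ → ℝ) (t : ℝ) : Monotone (dyadicMax f t) :=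
  monotone_nat_of_le_succ fun N => ciSup_le fun k => by
    rw [dyadic_eq_dyadic_succ]; exact le_dyadicMax f t (N + 1) _

theorem iSup_dyadicMax {f : ℝ → ℝ} {t : ℝ} (ht : 0 ≤ t)
    (hrc : ∀ s, 0 ≤ s → ContinuousWithinAt f (Ici s) s) (hb : BddAbove (f '' Icc 0 t)) :
    ⨆ N, dyadicMax f t N = sSup (f '' Icc 0 t) := by
  have hbdd : BddAbove (range (dyadicMax f t)) :=
    ⟨_, forall_mem_range.mpr (dyadicMax_le_sSup ht hb)⟩
  refine le_antisymm (ciSup_le (dyadicMax_le_sSup ht hb)) ?_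
  refine csSup_le ((nonempty_Icc.mpr ht).image f) (forall_mem_image.mpr fun s hs => ?_)
  refine le_of_forall_lt fun c hc => ?_
  obtain ⟨u, hu, hsub⟩ := mem_nhdsGE_iff_exists_Ico_subset.mp
    ((hrc s hs.1).eventually (eventually_gt_nhds hc))
  obtain ⟨N, k, hk⟩ := exists_dyadic_mem_Ico hs (sub_pos.mpr (mem_Ioi.mp hu))
  calc c < f (dyadic t N k) := hsub ⟨hk.1, by linarith [hk.2]⟩
    _ ≤ dyadicMax f t N := le_dyadicMax f t N k
    _ ≤ ⨆ N, dyadicMax f t N := le_ciSup hbdd N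

theorem tendsto_dyadicMax {f : ℝ → ℝ} {t : ℝ} (ht : 0 ≤ t)
    (hrc : ∀ s, 0 ≤ s → ContinuousWithinAt f (Ici s) s) (hb : BddAbove (f '' Icc 0 t)) :
    Tendsto (dyadicMax f t) atTop (𝓝 (sSup (f '' Icc 0 t))) := by
  rw [← iSup_dyadicMax ht hrc hb]
  exact tendsto_atTop_ciSup (monotone_dyadicMax f t)
    ⟨_, forall_mem_range.mpr (dyadicMax_le_sSup ht hb)⟩

theorem iSup_rat_eq_iSup_Ici {f : ℝ → ℝ} {t : ℝ}
    (hrc : ∀ s, t ≤ s → ContinuousWithinAt f (Ici s) s) :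
    ⨆ q : ℚ, (f (t + max (q : ℝ) 0) : EReal) = ⨆ v : {v : ℝ // t ≤ v}, (f v : EReal) := by
  refine le_antisymm (iSup_le fun q => le_iSup_of_le ⟨_, le_add_of_nonneg_right
    (le_max_right _ _)⟩ le_rfl) (iSup_le fun ⟨s, hs⟩ => ?_)
  refine EReal.ge_of_forall_gt_iff_ge.mp fun c hc => ?_
  obtain ⟨u, hu, hsub⟩ := mem_nhdsGE_iff_exists_Ico_subset.mp
    ((hrc s hs).eventually (eventually_gt_nhds (EReal.coe_lt_coe_iff.mp hc)))
  obtain ⟨q, hq1, hq2⟩ := exists_rat_btwn (show s - t < u - t by linarith [mem_Ioi.mp hu])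
  have hq : t + max (q : ℝ) 0 = t + q := by rw [max_eq_left (by linarith)]
  refine le_iSup_of_le q (EReal.coe_le_coe_iff.mpr (le_of_lt ?_))
  rw [hq]
  exact hsub ⟨by linarith, by linarith⟩

theorem coe_lt_unUStarInf_iff {Ω : Type*} {X : ℝ → Ω → ℝ} {ω : Ω} {t x : ℝ} (ht : 0 ≤ t)
    (hx : 0 ≤ x) (hb : BddAbove ((fun s => X s ω) '' Icc 0 t)) :
    (x : EReal) < unUStarInf X t ω ↔ ((x + drawdown X t ω : ℝ) : EReal) < futSupE X t ω := by
  have hle : ∀ u ∈ Icc 0 t, X u ω ≤ ovX X t ω := fun u hu => le_csSup hb (mem_image_of_mem _ hu)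
  unfold unUStarInf futSupE drawdown
  constructor
  · contrapose!
    intro hfut
    refine EReal.le_of_forall_lt_iff_le.mp fun z hz => ?_
    have hxz : x < z := EReal.coe_lt_coe_iff.mp hz
    obtain ⟨_, ⟨u, hu, rfl⟩, hu_near⟩ := exists_lt_of_lt_csSup ((nonempty_Icc.mpr ht).image _)
      (show ovX X t ω - (z - x) < ovX X t ω by linarith)
    refine iInf_le_of_le ⟨u, hu⟩ (iSup_le fun ⟨v, hv⟩ => EReal.coe_le_coe_iff.mpr ?_)
    rcases le_total v t with hvt | htv
    · linarith [hle v ⟨hu.1.trans hv, hvt⟩]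
    · have := (le_iSup (fun v : {v // t ≤ v} => ((X v ω - X t ω : ℝ) : EReal)) ⟨v, htv⟩).trans
        hfut
      linarith [EReal.coe_le_coe_iff.mp this]
  · rw [lt_iSup_iff]
    rintro ⟨⟨v, hv⟩, hlt⟩
    have hlt' := EReal.coe_lt_coe_iff.mp hlt
    refine lt_of_lt_of_le (EReal.coe_lt_coe_iff.mpr (show x < X v ω - ovX X t ω by linarith))
      (le_iInf fun ⟨u, hu⟩ => le_iSup_of_le ⟨v, hu.2.trans hv⟩ (EReal.coe_le_coe_iff.mpr ?_))
    linarith [hle u hu]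

theorem Fin.partialSum_comp_rev {M : Type*} [AddCommGroup M] {n : ℕ} (y : Fin n → M)
    (k : Fin (n + 1)) :
    Fin.partialSum (y ∘ Fin.rev) k = Fin.partialSum y (Fin.last n) - Fin.partialSum y k.rev := by
  induction k using Fin.induction with
  | zero => simp
  | succ k ih =>
    rw [Fin.partialSum_succ, ih, Fin.rev_succ, Fin.rev_castSucc, Fin.partialSum_succ,
      Function.comp_apply]
    abel

theorem measurable_partialSum {M : Type*} [AddMonoid M] [MeasurableSpace M] [MeasurableAdd₂ M]
    {n : ℕ} (k : Fin (n + 1)) : Measurable fun y : Fin n → M => Fin.partialSum y k := by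
  induction k using Fin.induction with
  | zero => simp [measurable_const]
  | succ k ih =>
    simp only [Fin.partialSum_succ]
    exact ih.add (measurable_pi_apply k)

theorem ciSup_sub_const {ι α : Type*} [Finite ι] [Nonempty ι] [ConditionallyCompleteLattice α]
    [AddGroup α] [AddRightMono α] (f : ι → α) (c : α) :
    (⨆ i, f i) - c = ⨆ i, (f i - c) := by
  simpa only [sub_eq_add_neg, OrderIso.addRight_apply] using
    (OrderIso.addRight (-c)).map_ciSup (Finite.bddAbove_range f)

theorem iSup_partialSum_sub_last {n : ℕ} (y : Fin n → ℝ) :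
    ⨆ k, (Fin.partialSum y k - Fin.partialSum y (Fin.last n))
      = ⨆ k, -Fin.partialSum (y ∘ Fin.rev) k := by
  simp_rw [Fin.partialSum_comp_rev, neg_sub]
  exact (Fin.revPerm.iSup_comp
    (g := fun k => Fin.partialSum y k - Fin.partialSum y (Fin.last n))).symm

def increments {Ω : Type*} (X : ℝ → Ω → ℝ) {m : ℕ} (a : Fin (m + 1) → ℝ) (ω : Ω) :
    Fin m → ℝ :=
  fun i => X (a i.succ) ω - X (a i.castSucc) ω

theorem partialSum_increments {Ω : Type*} (X : ℝ → Ω → ℝ) {m : ℕ} (a : Fin (m + 1) → ℝ)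
    (ω : Ω) (k : Fin (m + 1)) : Fin.partialSum (increments X a ω) k = X (a k) ω - X (a 0) ω := by
  induction k using Fin.induction with
  | zero => simp
  | succ k ih => rw [Fin.partialSum_succ, ih, increments]; ring

theorem increments_preimage_univ_pi {Ω : Type*} (X : ℝ → Ω → ℝ) {m : ℕ}
    (a : Fin (m + 2) → ℝ) (s : Fin (m + 1) → Set ℝ) :
    increments X a ⁻¹' univ.pi s
      = (fun ω => X (a (Fin.last _)) ω - X (a (Fin.last m).castSucc) ω) ⁻¹' s (Fin.last m)
        ∩ increments X (fun i => a i.castSucc) ⁻¹' univ.pi fun i => s i.castSucc := by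
  ext ω
  simp only [mem_preimage, mem_univ_pi, mem_inter_iff, Fin.forall_fin_succ' (n := m), increments,
    Fin.succ_last, Fin.succ_castSucc]
  tauto

/-- Measurable on path space, and equal to the supremum over all nonnegative times on the
right-continuous paths `s ↦ X (t + max s 0) - X t`. -/
def supRat (z : ℝ → ℝ) : EReal := ⨆ q : ℚ, (z q : EReal)

theorem measurable_supRat : Measurable supRat :=
  Measurable.iSup fun _ => (measurable_pi_apply _).coe_real_ereal

theorem norm_exp_neg_mul_le_one {α d : ℝ} (hα : 0 ≤ α) (hd : 0 ≤ d) :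
    ‖Real.exp (-α * d)‖ ≤ 1 := by
  rw [Real.norm_of_nonneg (Real.exp_pos _).le, Real.exp_le_one_iff]
  nlinarith

theorem MeasureTheory.Measure.map_comp_equiv_pi {ι α : Type*} [Fintype ι] [MeasurableSpace α]
    (μ : Measure α) [SigmaFinite μ] (e : ι ≃ ι) :
    (Measure.pi fun _ : ι => μ).map (fun y => y ∘ e) = Measure.pi fun _ => μ :=
  (measurePreserving_arrowCongr' (fun _ => μ) (fun _ => μ) e.symm (MeasurableEquiv.refl α)
    fun _ => MeasurePreserving.id μ).map_eq

theorem ProbabilityTheory.IndepFun.measure_coe_lt {P : Measure Ω} [IsFiniteMeasure P]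
    {Y : Ω → ℝ} {Z : Ω → EReal} (hYZ : IndepFun Y Z P) (hY : Measurable Y) (hZ : Measurable Z) :
    P {ω | (Y ω : EReal) < Z ω} = ∫⁻ ω, P.map Z (Ioi (Y ω : EReal)) ∂P := by
  have hS : MeasurableSet {p : ℝ × EReal | (p.1 : EReal) < p.2} :=
    measurableSet_lt measurable_fst.coe_real_ereal measurable_snd
  calc P {ω | (Y ω : EReal) < Z ω}
      = P.map (fun ω => (Y ω, Z ω)) {p : ℝ × EReal | (p.1 : EReal) < p.2} :=
        (Measure.map_apply (hY.prodMk hZ) hS).symm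
    _ = ((P.map Y).prod (P.map Z)) {p : ℝ × EReal | (p.1 : EReal) < p.2} := by
        rw [(indepFun_iff_map_prod_eq_prod_map_map hY.aemeasurable hZ.aemeasurable).mp hYZ]
    _ = ∫⁻ y, P.map Z (Ioi (y : EReal)) ∂(P.map Y) := Measure.prod_apply hS
    _ = ∫⁻ ω, P.map Z (Ioi (Y ω : EReal)) ∂P :=
        lintegral_map (measurable_measure_prodMk_left hS) hY

section Measure

variable {P : Measure Ω}

theorem antitone_measure_coe_lt (Z : Ω → EReal) :
    Antitone fun x : ℝ => P {ω | (x : EReal) < Z ω} :=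
  fun _ _ hxy => measure_mono fun _ hω => (EReal.coe_le_coe_iff.mpr hxy).trans_lt hω

theorem integral_exp_neg_mul_mem_Ioc [IsProbabilityMeasure P] {α : ℝ} (hα : 0 ≤ α)
    {D : Ω → ℝ} (hD : Measurable D) (hD0 : ∀ ω, 0 ≤ D ω) :
    ∫ ω, Real.exp (-α * D ω) ∂P ∈ Ioc 0 1 := by
  have hint : Integrable (fun ω => Real.exp (-α * D ω)) P :=
    .mono' (integrable_const 1) (by fun_prop)
      (ae_of_all _ fun ω => norm_exp_neg_mul_le_one hα (hD0 ω))
  refine ⟨integral_exp_pos hint, ?_⟩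
  calc ∫ ω, Real.exp (-α * D ω) ∂P ≤ ∫ _, (1 : ℝ) ∂P :=
        integral_mono hint (integrable_const 1) fun ω => (Real.le_norm_self _).trans
          (norm_exp_neg_mul_le_one hα (hD0 ω))
    _ = 1 := by simp

theorem tendsto_integral_exp_neg_mul [IsFiniteMeasure P] {α : ℝ} (hα : 0 ≤ α)
    {D : ℕ → Ω → ℝ} {D' : Ω → ℝ} (hD : ∀ N, Measurable (D N)) (hD0 : ∀ N ω, 0 ≤ D N ω)
    (hlim : ∀ ω, Tendsto (fun N => D N ω) atTop (𝓝 (D' ω))) :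
    Tendsto (fun N => ∫ ω, Real.exp (-α * D N ω) ∂P) atTop
      (𝓝 (∫ ω, Real.exp (-α * D' ω) ∂P)) :=
  tendsto_integral_of_dominated_convergence (fun _ => 1) (fun N => by fun_prop)
    (integrable_const 1) (fun N => ae_of_all _ fun ω => norm_exp_neg_mul_le_one hα (hD0 N ω))
    (ae_of_all _ fun ω => ((Real.continuous_exp.tendsto _).comp ((hlim ω).const_mul (-α))))

theorem tendsto_integral_div_of_tail [IsFiniteMeasure P] {r : ℝ → ℝ} (hr : Antitone r)
    (hpos : ∀ x, 0 ≤ x → 0 < r x) {α : ℝ}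
    (htail : ∀ y, Tendsto (fun x => r (x - y) / r x) atTop (𝓝 (Real.exp (α * y))))
    {D : Ω → ℝ} (hD : Measurable D) (hD0 : ∀ ω, 0 ≤ D ω) :
    Tendsto (fun x => ∫ ω, r (x + D ω) / r x ∂P) atTop (𝓝 (∫ ω, Real.exp (-α * D ω) ∂P)) := by
  refine tendsto_integral_filter_of_dominated_convergence (fun _ => 1)
    (.of_forall fun x => ((hr.measurable.comp (hD.const_add x)).div_const _).aestronglyMeasurable)
    ?_ (integrable_const 1) (ae_of_all _ fun ω => ?_)
  · filter_upwards [eventually_ge_atTop 0] with x hx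
    refine ae_of_all _ fun ω => ?_
    rw [Real.norm_of_nonneg (div_nonneg (hpos _ (add_nonneg hx (hD0 ω))).le (hpos x hx).le)]
    exact div_le_one_of_le₀ (hr (le_add_of_nonneg_right (hD0 ω))) (hpos x hx).le
  · simpa only [sub_neg_eq_add, mul_neg, neg_mul] using htail (-D ω)

end Measure

namespace IsLevyProcess

variable {P : Measure Ω} {X : ℝ → Ω → ℝ}

theorem isBounded_image (hX : IsLevyProcess P X) (ω : Ω) (t : ℝ) :
    Bornology.IsBounded ((fun s => X s ω) '' Icc 0 t) :=
  isBounded_image_Icc_of_cadlag t (hX.right_cont ω) (hX.left_lim ω)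

theorem drawdown_nonneg (hX : IsLevyProcess P X) (ω : Ω) {t : ℝ} (ht : 0 ≤ t) :
    0 ≤ drawdown X t ω :=
  sub_nonneg.mpr (le_csSup (hX.isBounded_image ω t).bddAbove (mem_image_of_mem _ ⟨ht, le_rfl⟩))

theorem tendsto_dyadicMax (hX : IsLevyProcess P X) (ω : Ω) {t : ℝ} (ht : 0 ≤ t) :
    Tendsto (dyadicMax (X · ω) t) atTop (𝓝 (ovX X t ω)) :=
  _root_.tendsto_dyadicMax ht (hX.right_cont ω) (hX.isBounded_image ω t).bddAbove

theorem tendsto_dyadicMax_neg (hX : IsLevyProcess P X) (ω : Ω) {t : ℝ} (ht : 0 ≤ t) :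
    Tendsto (dyadicMax (fun s => -X s ω) t) atTop (𝓝 (-unX X t ω)) := by
  have himage : (fun s => -X s ω) '' Icc 0 t = -((fun s => X s ω) '' Icc 0 t) := by
    rw [← image_neg_eq_neg, image_image]
  have h := _root_.tendsto_dyadicMax (f := fun s => -X s ω) ht
    (fun s hs => (hX.right_cont ω s hs).neg) (himage ▸ (hX.isBounded_image ω t).neg.bddAbove)
  rwa [himage, ← neg_neg (sSup _), ← Real.sInf_def] at h

theorem measurable_stoppedPath (hX : IsLevyProcess P X) (t : ℝ) :
    Measurable fun ω (u : Icc (0 : ℝ) t) => X u ω :=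
  measurable_pi_lambda _ fun u => hX.measurable u

theorem exists_measurable_drawdown_eq_comp (hX : IsLevyProcess P X) {t : ℝ} (ht : 0 ≤ t) :
    ∃ G : (Icc (0 : ℝ) t → ℝ) → ℝ, Measurable G ∧
      drawdown X t = fun ω => G fun u => X u ω := by
  refine ⟨fun y =>
      (⨆ N : ℕ, ⨆ k, y ⟨dyadic t N k, dyadic_mem_Icc ht N k⟩) - y ⟨t, right_mem_Icc.mpr ht⟩,
    Measurable.sub (Measurable.iSup fun N => Measurable.iSup fun k => measurable_pi_apply _)
      (measurable_pi_apply _), funext fun ω => ?_⟩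
  change ovX X t ω - X t ω = (⨆ N, dyadicMax (X · ω) t N) - X t ω
  rw [iSup_dyadicMax ht (hX.right_cont ω) (hX.isBounded_image ω t).bddAbove, ovX]

theorem measurable_drawdown (hX : IsLevyProcess P X) {t : ℝ} (ht : 0 ≤ t) :
    Measurable (drawdown X t) := by
  obtain ⟨G, hG, hGX⟩ := hX.exists_measurable_drawdown_eq_comp ht
  exact hGX ▸ hG.comp (hX.measurable_stoppedPath t)

theorem measurable_futurePath (hX : IsLevyProcess P X) (t : ℝ) :
    Measurable fun ω (s : ℝ) => X (t + max s 0) ω - X t ω :=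
  measurable_pi_lambda _ fun _ => (hX.measurable _).sub (hX.measurable t)

theorem supRat_futurePath (hX : IsLevyProcess P X) {t : ℝ} (ht : 0 ≤ t) (ω : Ω) :
    supRat (fun s => X (t + max s 0) ω - X t ω) = futSupE X t ω :=
  iSup_rat_eq_iSup_Ici (f := fun v => X v ω - X t ω) fun s hs =>
    (hX.right_cont ω s (ht.trans hs)).sub continuousWithinAt_const

theorem supRat_path (hX : IsLevyProcess P X) (ω : Ω) :
    supRat (fun s => X (max s 0) ω) = MSup X ω := by
  simpa [supRat, MSup] using
    iSup_rat_eq_iSup_Ici (t := 0) (f := (X · ω)) fun s hs => hX.right_cont ω s hs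

theorem futSupE_eq_supRat_comp (hX : IsLevyProcess P X) {t : ℝ} (ht : 0 ≤ t) :
    futSupE X t = supRat ∘ fun ω s => X (t + max s 0) ω - X t ω :=
  funext fun ω => (hX.supRat_futurePath ht ω).symm

theorem MSup_eq_supRat_comp (hX : IsLevyProcess P X) :
    MSup X = supRat ∘ fun ω s => X (max s 0) ω :=
  funext fun ω => (hX.supRat_path ω).symm

theorem measurable_MSup (hX : IsLevyProcess P X) : Measurable (MSup X) :=
  hX.MSup_eq_supRat_comp ▸
    measurable_supRat.comp (measurable_pi_lambda _ fun _ => hX.measurable _)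

theorem measurable_futSupE (hX : IsLevyProcess P X) {t : ℝ} (ht : 0 ≤ t) :
    Measurable (futSupE X t) :=
  hX.futSupE_eq_supRat_comp ht ▸ measurable_supRat.comp (hX.measurable_futurePath t)

theorem map_futSupE (hX : IsLevyProcess P X) {t : ℝ} (ht : 0 ≤ t) :
    P.map (futSupE X t) = P.map (MSup X) := by
  rw [hX.futSupE_eq_supRat_comp ht, hX.MSup_eq_supRat_comp,
    ← Measure.map_map measurable_supRat (hX.measurable_futurePath t),
    ← Measure.map_map measurable_supRat (measurable_pi_lambda _ fun _ => hX.measurable _),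
    hX.stat_incr t ht]

theorem indepFun_drawdown_futSupE (hX : IsLevyProcess P X) {t : ℝ} (ht : 0 ≤ t) :
    IndepFun (drawdown X t) (futSupE X t) P := by
  obtain ⟨G, hG, hGX⟩ := hX.exists_measurable_drawdown_eq_comp ht
  rw [hGX, hX.futSupE_eq_supRat_comp ht]
  exact ((hX.indep_incr t ht).comp measurable_supRat hG).symm

theorem measure_lt_unUStarInf [IsFiniteMeasure P] (hX : IsLevyProcess P X) {t x : ℝ}
    (ht : 0 ≤ t) (hx : 0 ≤ x) :
    P {ω | (x : EReal) < unUStarInf X t ω}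
      = ∫⁻ ω, P {ω' | ((x + drawdown X t ω : ℝ) : EReal) < MSup X ω'} ∂P := by
  have hevent : {ω | (x : EReal) < unUStarInf X t ω}
      = {ω | ((x + drawdown X t ω : ℝ) : EReal) < futSupE X t ω} :=
    ext fun ω => coe_lt_unUStarInf_iff ht hx (hX.isBounded_image ω t).bddAbove
  rw [hevent, IndepFun.measure_coe_lt (Y := fun ω => x + drawdown X t ω) (Z := futSupE X t)
    ((hX.indepFun_drawdown_futSupE ht).comp (measurable_const_add x) measurable_id)
    ((hX.measurable_drawdown ht).const_add x) (hX.measurable_futSupE ht), hX.map_futSupE ht]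
  exact lintegral_congr fun ω => Measure.map_apply hX.measurable_MSup measurableSet_Ioi

theorem toReal_measure_lt_unUStarInf [IsFiniteMeasure P] (hX : IsLevyProcess P X) {t x : ℝ}
    (ht : 0 ≤ t) (hx : 0 ≤ x) :
    (P {ω | (x : EReal) < unUStarInf X t ω}).toReal
      = ∫ ω, (P {ω' | ((x + drawdown X t ω : ℝ) : EReal) < MSup X ω'}).toReal ∂P := by
  rw [hX.measure_lt_unUStarInf ht hx]
  exact (integral_toReal ((antitone_measure_coe_lt _).measurable.comp
    ((hX.measurable_drawdown ht).const_add x)).aemeasurable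
    (ae_of_all _ fun _ => measure_lt_top _ _)).symm

theorem measurable_increments (hX : IsLevyProcess P X) {m : ℕ} (a : Fin (m + 1) → ℝ) :
    Measurable (increments X a) :=
  measurable_pi_lambda _ fun _ => (hX.measurable _).sub (hX.measurable _)

theorem map_sub_eq_map (hX : IsLevyProcess P X) {t u : ℝ} (ht : 0 ≤ t) (htu : t ≤ u) :
    P.map (fun ω => X u ω - X t ω) = P.map (X (u - t)) := by
  have h := congrArg (Measure.map fun z : ℝ → ℝ => z (u - t)) (hX.stat_incr t ht)
  rw [Measure.map_map (measurable_pi_apply _) (hX.measurable_futurePath t),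
    Measure.map_map (measurable_pi_apply _) (measurable_pi_lambda _ fun _ => hX.measurable _)]
    at h
  simp only [Function.comp_def, max_eq_left (sub_nonneg.mpr htu), add_sub_cancel] at h
  exact h

theorem indepFun_sub_comp_stoppedPath (hX : IsLevyProcess P X) {t u : ℝ} (ht : 0 ≤ t)
    (htu : t ≤ u) {β : Type*} [MeasurableSpace β] {g : (Icc (0 : ℝ) t → ℝ) → β}
    (hg : Measurable g) :
    IndepFun (fun ω => X u ω - X t ω) (fun ω => g fun s => X s ω) P := by
  have h := (hX.indep_incr t ht).comp (measurable_pi_apply (u - t)) hg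
  simp only [Function.comp_def, max_eq_left (sub_nonneg.mpr htu), add_sub_cancel] at h
  exact h

theorem map_increments [IsProbabilityMeasure P] (hX : IsLevyProcess P X) {m : ℕ}
    (a : Fin (m + 1) → ℝ) (ha : Monotone a) (ha0 : 0 ≤ a 0) :
    P.map (increments X a) = Measure.pi fun i => P.map (X (a i.succ - a i.castSucc)) := by
  induction m with
  | zero =>
    refine (Measure.pi_eq fun s _ => ?_).symm
    rw [show univ.pi s = univ from eq_univ_of_forall fun _ i => i.elim0,
      Measure.map_apply (hX.measurable_increments a) .univ, preimage_univ, measure_univ]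
    simp
  | succ m ih =>
    refine (Measure.pi_eq fun s hs => ?_).symm
    set T := a (Fin.last m).castSucc
    have hT : 0 ≤ T := ha0.trans (ha (Fin.zero_le _))
    have hmemT : ∀ i : Fin (m + 1), a i.castSucc ∈ Icc 0 T := fun i =>
      ⟨ha0.trans (ha (Fin.zero_le _)), ha (Fin.castSucc_le_castSucc_iff.mpr (Fin.le_last i))⟩
    have hindep : IndepFun (fun ω => X (a (Fin.last _)) ω - X T ω)
        (increments X fun i => a i.castSucc) P :=
      hX.indepFun_sub_comp_stoppedPath hT (ha (Fin.le_last _))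
        (g := fun (y : Icc (0 : ℝ) T → ℝ) (i : Fin m) =>
          y ⟨_, hmemT i.succ⟩ - y ⟨_, hmemT i.castSucc⟩)
        (measurable_pi_lambda _ fun _ => (measurable_pi_apply _).sub (measurable_pi_apply _))
    rw [Measure.map_apply (hX.measurable_increments a) (.univ_pi hs), increments_preimage_univ_pi,
      hindep.measure_inter_preimage_eq_mul _ _ (hs _) (.univ_pi fun i => hs _),
      ← Measure.map_apply (f := fun ω => X (a (Fin.last _)) ω - X T ω)
        ((hX.measurable _).sub (hX.measurable _)) (hs _),
      ← Measure.map_apply (hX.measurable_increments _) (.univ_pi fun i => hs _),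
      ih (fun i => a i.castSucc) (ha.comp Fin.strictMono_castSucc.monotone) ha0, Measure.pi_pi,
      hX.map_sub_eq_map hT (ha (Fin.le_last _)), Fin.prod_univ_castSucc, mul_comm]
    simp only [Fin.succ_last, Fin.succ_castSucc, T]

theorem map_dyadicMax_sub_eq [IsProbabilityMeasure P] (hX : IsLevyProcess P X) {t : ℝ}
    (ht : 0 ≤ t) (N : ℕ) :
    P.map (fun ω => dyadicMax (X · ω) t N - X t ω)
      = P.map (fun ω => dyadicMax (fun s => -X s ω) t N) := by
  set Y := increments X (dyadic t N)
  set Ψ : (Fin (2 ^ N) → ℝ) → ℝ := fun y => ⨆ k, -Fin.partialSum y k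
  have hΨ : Measurable Ψ := Measurable.iSup fun k => (measurable_partialSum k).neg
  have hrev : Measurable fun y : Fin (2 ^ N) → ℝ => y ∘ Fin.rev :=
    measurable_pi_lambda _ fun _ => measurable_pi_apply _
  have hY : P.map Y = Measure.pi fun _ => P.map (X (t / 2 ^ N)) := by
    rw [hX.map_increments _ (monotone_dyadic ht N) (by simp)]
    simp_rw [dyadic_succ_sub_castSucc]
  have hΦ : (fun ω => dyadicMax (X · ω) t N - X t ω) = (Ψ ∘ fun y => y ∘ Fin.rev) ∘ Y := by
    funext ω
    simp only [Function.comp_apply, Ψ, ← iSup_partialSum_sub_last, Y, partialSum_increments,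
      sub_sub_sub_cancel_right, dyadic_last, dyadicMax, ciSup_sub_const]
  have hΨY : (fun ω => dyadicMax (fun s => -X s ω) t N) = Ψ ∘ Y := by
    funext ω
    simp only [Function.comp_apply, Ψ, Y, partialSum_increments, dyadic_zero, hX.init,
      sub_zero, dyadicMax]
  rw [hΦ, hΨY, ← Measure.map_map (hΨ.comp hrev) (hX.measurable_increments _),
    ← Measure.map_map hΨ (hX.measurable_increments _), hY, ← Measure.map_map hΨ hrev]
  exact congrArg (Measure.map Ψ) (Measure.map_comp_equiv_pi _ Fin.revPerm)

theorem integral_exp_neg_drawdown_eq [IsProbabilityMeasure P] (hX : IsLevyProcess P X) {t : ℝ}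
    (ht : 0 ≤ t) {α : ℝ} (hα : 0 ≤ α) :
    ∫ ω, Real.exp (-α * drawdown X t ω) ∂P = ∫ ω, Real.exp (α * unX X t ω) ∂P := by
  have hmeas : ∀ N, Measurable fun ω => dyadicMax (X · ω) t N - X t ω :=
    fun N => (Measurable.iSup fun k => hX.measurable _).sub (hX.measurable t)
  have hmeas' : ∀ N, Measurable fun ω => dyadicMax (fun s => -X s ω) t N :=
    fun N => Measurable.iSup fun k => (hX.measurable _).neg
  have hL := tendsto_integral_exp_neg_mul (P := P) hα
    (D := fun N ω => dyadicMax (X · ω) t N - X t ω) (D' := drawdown X t) hmeas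
    (fun N ω => sub_nonneg.mpr (by simpa using le_dyadicMax (X · ω) t N (Fin.last _)))
    fun ω => (hX.tendsto_dyadicMax ω ht).sub_const (X t ω)
  have hR := tendsto_integral_exp_neg_mul (P := P) hα hmeas'
    (fun N ω => by simpa [hX.init] using le_dyadicMax (fun s => -X s ω) t N 0)
    fun ω => hX.tendsto_dyadicMax_neg ω ht
  have hlevel : ∀ N, ∫ ω, Real.exp (-α * (dyadicMax (X · ω) t N - X t ω)) ∂P
      = ∫ ω, Real.exp (-α * dyadicMax (fun s => -X s ω) t N) ∂P := fun N => by
    have hg : Measurable fun d : ℝ => Real.exp (-α * d) := by fun_prop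
    rw [← integral_map (hmeas N).aemeasurable hg.aestronglyMeasurable,
      hX.map_dyadicMax_sub_eq ht N, integral_map (hmeas' N).aemeasurable hg.aestronglyMeasurable]
  simpa only [mul_neg, neg_mul, neg_neg] using tendsto_nhds_unique (hL.congr hlevel) hR

end IsLevyProcess

theorem heavy_tail_asymptotics_unUStar_general
    {Ω : Type*} [MeasurableSpace Ω] (P : Measure Ω) [IsProbabilityMeasure P]
    (X : ℝ → Ω → ℝ) (hX : IsLevyProcess P X)
    (α : ℝ) (hα : 0 < α)
    (hpos : ∀ x : ℝ, 0 ≤ x → 0 < (P {ω | (x : EReal) < MSup X ω}).toReal)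
    (htail : ∀ y : ℝ, Filter.Tendsto
      (fun x : ℝ => (P {ω | ((x - y : ℝ) : EReal) < MSup X ω}).toReal
        / (P {ω | (x : EReal) < MSup X ω}).toReal)
      Filter.atTop (nhds (Real.exp (α * y))))
    (t : ℝ) (ht : 0 < t) :
    (0 < ∫ ω, Real.exp (-α * drawdown X t ω) ∂P
      ∧ ∫ ω, Real.exp (-α * drawdown X t ω) ∂P ≤ 1) ∧
    (∫ ω, Real.exp (-α * drawdown X t ω) ∂P
      = ∫ ω, Real.exp (α * unX X t ω) ∂P) ∧
    Filter.Tendsto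
      (fun x : ℝ => (P {ω | (x : EReal) < unUStarInf X t ω}).toReal
        / (P {ω | (x : EReal) < MSup X ω}).toReal)
      Filter.atTop (nhds (∫ ω, Real.exp (-α * drawdown X t ω) ∂P)) := by
  have hD := hX.measurable_drawdown ht.le
  have hD0 : ∀ ω, 0 ≤ drawdown X t ω := fun ω => hX.drawdown_nonneg ω ht.le
  have hr : Antitone fun x : ℝ => (P {ω | (x : EReal) < MSup X ω}).toReal :=
    fun _ _ hxy => ENNReal.toReal_mono (measure_ne_top _ _) (antitone_measure_coe_lt _ hxy)
  refine ⟨integral_exp_neg_mul_mem_Ioc hα.le hD hD0, hX.integral_exp_neg_drawdown_eq ht.le hα.le,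
    (tendsto_integral_div_of_tail hr hpos htail hD hD0).congr' ?_⟩
  filter_upwards [eventually_ge_atTop 0] with x hx
  rw [hX.toReal_measure_lt_unUStarInf ht.le hx, integral_div]

/-- **Heavy-tailed asymptotics of the running infimum of the future drawup**
(Theorem 4.1, second assertion): if `E[X_1] ∈ (-∞,0)` and the tail
`r(x) = P(M > x)` of `M = sup_{s≥0} X_s` is positive with
`r(x-y)/r(x) → e^{α y}` (class `L^{(α)}`), then for every `t > 0`,
`P(\underline U^*_t > x)/r(x) → E[e^{-α D_t}] = E[e^{α \underline X_t}] ∈ (0,1]`. -/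
theorem heavy_tail_asymptotics_unUStar
    {Ω : Type*} [MeasurableSpace Ω] (P : Measure Ω) [IsProbabilityMeasure P]
    (X : ℝ → Ω → ℝ) (hX : IsLevyProcess P X)
    (hint : Integrable (X 1) P) (hmean : ∫ ω, X 1 ω ∂P < 0)
    (α : ℝ) (hα : 0 < α)
    (hpos : ∀ x : ℝ, 0 ≤ x → 0 < (P {ω | (x : EReal) < MSup X ω}).toReal)
    (htail : ∀ y : ℝ, Filter.Tendsto
      (fun x : ℝ => (P {ω | ((x - y : ℝ) : EReal) < MSup X ω}).toReal
        / (P {ω | (x : EReal) < MSup X ω}).toReal)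
      Filter.atTop (nhds (Real.exp (α * y))))
    (t : ℝ) (ht : 0 < t) :
    (0 < ∫ ω, Real.exp (-α * drawdown X t ω) ∂P
      ∧ ∫ ω, Real.exp (-α * drawdown X t ω) ∂P ≤ 1) ∧
    (∫ ω, Real.exp (-α * drawdown X t ω) ∂P
      = ∫ ω, Real.exp (α * unX X t ω) ∂P) ∧
    Filter.Tendsto
      (fun x : ℝ => (P {ω | (x : EReal) < unUStarInf X t ω}).toReal
        / (P {ω | (x : EReal) < MSup X ω}).toReal)
      Filter.atTop (nhds (∫ ω, Real.exp (-α * drawdown X t ω) ∂P)) :=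
  heavy_tail_asymptotics_unUStar_general P X hX α hα hpos htail t ht

end
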